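/- For the Dirichlet Lagrangian l(x,y,v) = ½|v|² on maps ℝ² → ℝ², with W(z,p) = e + Σ p^μ_i v^i_μ + r(v^1_1 v^2_2 − v^1_2 v^2_1) − ½|v|², the stationarity condition ∂W/∂z = 0 is solvable for v in terms of p exactly when r ≠ ±1, with solution v^i_μ = (p^μ_i + ε_{μν} ε^{ij} p^ν_j r)/(1 − r²); the resulting Hamiltonian on the open set {r ≠ ±1} is H(q,p) = e + (1/(1−r²)) ( |p|²/2 + r (p^1_1 p^2_2 − p^1_2 p^2_1) ). -/

import Mathlib

/-- `W(q,z,p) = ⟨z,p⟩ - L(q,z)` for the Dirichlet Lagrangian `l = ½|v|²` on maps `ℝ² → ℝ²`,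
as a function of the velocity coordinates. -/
noncomputable def Wdir (e p11 p12 p21 p22 r : ℝ) (v11 v12 v21 v22 : ℝ) : ℝ :=
  e + p11 * v11 + p21 * v12 + p12 * v21 + p22 * v22 + r * (v11 * v22 - v12 * v21)
    - (v11 ^ 2 + v12 ^ 2 + v21 ^ 2 + v22 ^ 2) / 2

/-- The stationarity condition `∂W/∂z = 0` for the Dirichlet Lagrangian. -/
def DirStat (e p11 p12 p21 p22 r v11 v12 v21 v22 : ℝ) : Prop :=
  HasDerivAt (fun t => Wdir e p11 p12 p21 p22 r t v12 v21 v22) 0 v11 ∧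
  HasDerivAt (fun t => Wdir e p11 p12 p21 p22 r v11 t v21 v22) 0 v12 ∧
  HasDerivAt (fun t => Wdir e p11 p12 p21 p22 r v11 v12 t v22) 0 v21 ∧
  HasDerivAt (fun t => Wdir e p11 p12 p21 p22 r v11 v12 v21 t) 0 v22

/-! `∂W/∂v = 0` is a linear system that splits into the pairs `(v¹₁, v²₂)` and `(v¹₂, v²₁)`,
each of the form `x = a + s y, y = b + s x` with `s = ±r`. Eliminating `y` gives
`(1 - r²) x = a + s b`, so for `r ≠ ±1` the solution is unique, while for `r = ±1` the momentum
`p = (1, 0, 0, 0)` makes the system inconsistent. -/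

lemma hasDerivAt_zero_iff_of_eq_quadratic {f : ℝ → ℝ} {B : ℝ}
    (hf : ∀ t, f t = f 0 + B * t - t ^ 2 / 2) (x : ℝ) : HasDerivAt f 0 x ↔ x = B := by
  have hderiv : HasDerivAt f (B - x) x := by
    rw [funext hf]
    exact ((((hasDerivAt_id x).const_mul B).const_add (f 0)).sub
      ((hasDerivAt_pow 2 x).div_const 2)).congr_deriv (by ring)
  constructor
  · intro h0
    linarith [h0.unique hderiv]
  · rintro rfl
    simpa using hderiv

lemma dirStat_iff {e p11 p12 p21 p22 r v11 v12 v21 v22 : ℝ} :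
    DirStat e p11 p12 p21 p22 r v11 v12 v21 v22 ↔
      v11 = p11 + r * v22 ∧ v12 = p21 - r * v21 ∧ v21 = p12 - r * v12 ∧
        v22 = p22 + r * v11 := by
  unfold DirStat
  rw [hasDerivAt_zero_iff_of_eq_quadratic (B := p11 + r * v22)
      (fun t => by simp only [Wdir]; ring),
    hasDerivAt_zero_iff_of_eq_quadratic (B := p21 - r * v21)
      (fun t => by simp only [Wdir]; ring),
    hasDerivAt_zero_iff_of_eq_quadratic (B := p12 - r * v12)
      (fun t => by simp only [Wdir]; ring),
    hasDerivAt_zero_iff_of_eq_quadratic (B := p22 + r * v11)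
      (fun t => by simp only [Wdir]; ring)]

lemma DirStat.one_sub_sq_mul_eq {e p11 p12 p21 p22 r v11 v12 v21 v22 : ℝ}
    (h : DirStat e p11 p12 p21 p22 r v11 v12 v21 v22) :
    (1 - r ^ 2) * v11 = p11 + r * p22 ∧ (1 - r ^ 2) * v12 = p21 - r * p12 ∧
      (1 - r ^ 2) * v21 = p12 - r * p21 ∧ (1 - r ^ 2) * v22 = p22 + r * p11 := by
  obtain ⟨h11, h12, h21, h22⟩ := dirStat_iff.1 h
  exact ⟨by linear_combination h11 + r * h22, by linear_combination h12 - r * h21,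
    by linear_combination h21 - r * h12, by linear_combination h22 + r * h11⟩

lemma DirStat.eq_div {e p11 p12 p21 p22 r v11 v12 v21 v22 : ℝ} (hr : 1 - r ^ 2 ≠ 0)
    (h : DirStat e p11 p12 p21 p22 r v11 v12 v21 v22) :
    v11 = (p11 + r * p22) / (1 - r ^ 2) ∧ v12 = (p21 - r * p12) / (1 - r ^ 2) ∧
      v21 = (p12 - r * p21) / (1 - r ^ 2) ∧ v22 = (p22 + r * p11) / (1 - r ^ 2) := by
  obtain ⟨h11, h12, h21, h22⟩ := h.one_sub_sq_mul_eq
  refine ⟨?_, ?_, ?_, ?_⟩ <;> rw [eq_div_iff hr, mul_comm] <;> assumption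

lemma dirStat_div {e p11 p12 p21 p22 r : ℝ} (hr : 1 - r ^ 2 ≠ 0) :
    DirStat e p11 p12 p21 p22 r ((p11 + r * p22) / (1 - r ^ 2)) ((p21 - r * p12) / (1 - r ^ 2))
      ((p12 - r * p21) / (1 - r ^ 2)) ((p22 + r * p11) / (1 - r ^ 2)) := by
  rw [dirStat_iff]
  refine ⟨?_, ?_, ?_, ?_⟩ <;> field_simp <;> ring

lemma wdir_div {e p11 p12 p21 p22 r : ℝ} (hr : 1 - r ^ 2 ≠ 0) :
    Wdir e p11 p12 p21 p22 r ((p11 + r * p22) / (1 - r ^ 2)) ((p21 - r * p12) / (1 - r ^ 2))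
        ((p12 - r * p21) / (1 - r ^ 2)) ((p22 + r * p11) / (1 - r ^ 2))
      = e + (1 / (1 - r ^ 2)) *
          ((p11 ^ 2 + p12 ^ 2 + p21 ^ 2 + p22 ^ 2) / 2 + r * (p11 * p22 - p12 * p21)) := by
  simp only [Wdir]
  field_simp
  ring

lemma one_sub_sq_ne_zero_iff {r : ℝ} : 1 - r ^ 2 ≠ 0 ↔ r ≠ 1 ∧ r ≠ -1 := by
  rw [sub_ne_zero, ne_comm, Ne, sq_eq_one_iff, not_or]

theorem stmt13 (e r : ℝ) :
    ((r ≠ 1 ∧ r ≠ -1) ↔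
      ∀ p11 p12 p21 p22 : ℝ, ∃! v : ℝ × ℝ × ℝ × ℝ,
        DirStat e p11 p12 p21 p22 r v.1 v.2.1 v.2.2.1 v.2.2.2)
    ∧ ((r ≠ 1 ∧ r ≠ -1) →
        ∀ p11 p12 p21 p22 v11 v12 v21 v22 : ℝ,
          DirStat e p11 p12 p21 p22 r v11 v12 v21 v22 →
          (v11 = (p11 + r * p22) / (1 - r ^ 2) ∧
           v12 = (p21 - r * p12) / (1 - r ^ 2) ∧
           v21 = (p12 - r * p21) / (1 - r ^ 2) ∧
           v22 = (p22 + r * p11) / (1 - r ^ 2)) ∧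
          Wdir e p11 p12 p21 p22 r v11 v12 v21 v22
            = e + (1 / (1 - r ^ 2)) *
                ((p11 ^ 2 + p12 ^ 2 + p21 ^ 2 + p22 ^ 2) / 2
                  + r * (p11 * p22 - p12 * p21))) := by
  rw [← one_sub_sq_ne_zero_iff]
  refine ⟨⟨fun hr p11 p12 p21 p22 => ⟨((p11 + r * p22) / (1 - r ^ 2),
      (p21 - r * p12) / (1 - r ^ 2), (p12 - r * p21) / (1 - r ^ 2), (p22 + r * p11) / (1 - r ^ 2)),
      dirStat_div hr, fun v hv => ?_⟩, fun h => ?_⟩,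
    fun hr p11 p12 p21 p22 v11 v12 v21 v22 hv => ?_⟩
  · obtain ⟨h11, h12, h21, h22⟩ := hv.eq_div hr
    exact Prod.ext h11 (Prod.ext h12 (Prod.ext h21 h22))
  · obtain ⟨v, hv, -⟩ := h 1 0 0 0
    intro hr
    have h11 := hv.one_sub_sq_mul_eq.1
    rw [hr] at h11
    norm_num at h11
  · have hsol := hv.eq_div hr
    refine ⟨hsol, ?_⟩
    obtain ⟨rfl, rfl, rfl, rfl⟩ := hsol
    exact wdir_div hr
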